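/- Let (X, μ) be a probability space, τ > 0, and let κ' ∈ (0,1], η > 0, K' > 0. Let F : [0,τ] × X → ℝ be measurable with 0 ≤ F(t,x) ≤ 1 for all (t,x) and t ↦ F(t,x) nondecreasing for each x; let S : [0,τ] × X → ℝ be measurable with S(s,x) ≥ κ' for all (s,x); and let g : [0,τ] × X → ℝ be measurable with 0 ≤ g(s,x) ≤ η for all (s,x). For t ∈ [0,τ] define h̃_t(s,x) = −g(s,x) · 𝟙{s ≤ t} · (F(t,x) − F(s,x))/S(s,x). Fix 0 ≤ t ≤ t' ≤ τ and assume the Lipschitz-type condition (∫_X (F(t',x) − F(t,x))² dμ(x))^{1/2} ≤ K'·(t' − t)^{1/2}. Then ( ∫_X ∫_0^τ (h̃_{t'}(s,x) − h̃_t(s,x))² ds dμ(x) )^{1/2} ≤ (η/κ')·(1 + K'·√τ)·(t' − t)^{1/2}. -/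

import Mathlib

/-!
For `s ≤ t` the two index functions differ by `(g/S)·(F(t') − F(t))`, for `t < s ≤ t'` by
`(g/S)·(F(t') − F(s))`, which is at most `η/κ'` in absolute value because `0 ≤ F ≤ 1`, and for
`s > t'` they agree. Integrating the square over `s ∈ (0, τ]` gives at most
`(η/κ')²·(τ·(F(t') − F(t))² + (t' − t))`; integrating in `x` and inserting the Lipschitz-type
bound on `‖F(t') − F(t)‖_{L²(μ)}` yields the claim.
-/

open MeasureTheory Set

/-- The index function `h̃_t(s, x)`. -/
noncomputable def indexFun {X : Type*} (g S F : ℝ → X → ℝ) (t s : ℝ) (x : X) : ℝ :=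
  -(g s x * (if s ≤ t then (1:ℝ) else 0) * ((F t x - F s x) / S s x))

lemma sq_div_le_sq_div {g S η κ : ℝ} (hg : 0 ≤ g ∧ g ≤ η) (hκ : 0 < κ) (hS : κ ≤ S) :
    (g / S) ^ 2 ≤ (η / κ) ^ 2 :=
  pow_le_pow_left₀ (div_nonneg hg.1 (hκ.trans_le hS).le)
    (div_le_div₀ (hg.1.trans hg.2) hg.2 hκ hS) 2

lemma indexFun_sub_sq_le {X : Type*} {g S F : ℝ → X → ℝ} {τ κ η t t' s : ℝ} {x : X}
    (hF01 : ∀ u ∈ Icc 0 τ, 0 ≤ F u x ∧ F u x ≤ 1)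
    (hFmono : MonotoneOn (fun u => F u x) (Icc 0 τ))
    (hκ : 0 < κ) (hS : κ ≤ S s x) (hg : 0 ≤ g s x ∧ g s x ≤ η)
    (hs : s ∈ Icc 0 τ) (ht' : t' ∈ Icc 0 τ) (htt' : t ≤ t') :
    (indexFun g S F t' s x - indexFun g S F t s x) ^ 2 ≤
      (η / κ) ^ 2 * ((F t' x - F t x) ^ 2 + (Ioc t t').indicator 1 s) := by
  have hgS := sq_div_le_sq_div hg hκ hS
  rcases le_or_gt s t with hst | hts
  · have hdiff : indexFun g S F t' s x - indexFun g S F t s x =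
        -(g s x / S s x) * (F t' x - F t x) := by
      rw [indexFun, indexFun, if_pos (hst.trans htt'), if_pos hst]
      ring
    rw [hdiff, indicator_of_notMem fun h => (h.1.trans_le hst).false, add_zero, neg_mul, neg_sq,
      mul_pow]
    exact mul_le_mul_of_nonneg_right hgS (sq_nonneg _)
  rcases le_or_gt s t' with hst' | hts'
  · have hdiff : indexFun g S F t' s x - indexFun g S F t s x =
        -(g s x / S s x) * (F t' x - F s x) := by
      rw [indexFun, indexFun, if_pos hst', if_neg hts.not_ge]
      ring
    have hF : (F t' x - F s x) ^ 2 ≤ 1 :=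
      pow_le_one₀ (sub_nonneg.2 (hFmono hs ht' hst'))
        (by linarith [(hF01 s hs).1, (hF01 t' ht').2])
    rw [hdiff, indicator_of_mem (show s ∈ Ioc t t' from ⟨hts, hst'⟩), Pi.one_apply, neg_mul,
      neg_sq, mul_pow]
    calc (g s x / S s x) ^ 2 * (F t' x - F s x) ^ 2 ≤ (η / κ) ^ 2 * 1 :=
          mul_le_mul hgS hF (sq_nonneg _) (sq_nonneg _)
      _ ≤ (η / κ) ^ 2 * ((F t' x - F t x) ^ 2 + 1) := by
          gcongr; exact le_add_of_nonneg_left (sq_nonneg _)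
  · have hdiff : indexFun g S F t' s x - indexFun g S F t s x = 0 := by
      rw [indexFun, indexFun, if_neg hts'.not_ge, if_neg hts.not_ge]
      ring
    rw [hdiff, zero_pow two_ne_zero]
    exact mul_nonneg (sq_nonneg _)
      (add_nonneg (sq_nonneg _) (indicator_nonneg (fun _ _ => zero_le_one) _))

lemma setIntegral_Ioc_le_of_le_add_indicator {f : ℝ → ℝ} {c a τ t t' : ℝ} (hc : 0 ≤ c)
    (hτ : 0 ≤ τ) (htt' : t ≤ t') (hf0 : 0 ≤ f)
    (hf : ∀ s ∈ Ioc 0 τ, f s ≤ c * (a + (Ioc t t').indicator 1 s)) :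
    ∫ s in Ioc 0 τ, f s ≤ c * (τ * a + (t' - t)) := by
  have hind : Integrable ((Ioc t t').indicator (1 : ℝ → ℝ)) (volume.restrict (Ioc 0 τ)) :=
    (integrable_indicator_iff measurableSet_Ioc).2 (integrableOn_const measure_Ioc_lt_top.ne)
      |>.restrict
  calc ∫ s in Ioc 0 τ, f s ≤ ∫ s in Ioc 0 τ, c * (a + (Ioc t t').indicator 1 s) :=
        integral_mono_of_nonneg (.of_forall hf0) (((integrable_const a).add hind).const_mul c)
          ((ae_restrict_iff' measurableSet_Ioc).2 (.of_forall hf))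
    _ = c * (τ * a + (volume.restrict (Ioc 0 τ)).real (Ioc t t')) := by
        rw [integral_const_mul, integral_add (integrable_const a) hind,
          integral_indicator_one measurableSet_Ioc, integral_const, measureReal_restrict_apply_univ,
          Real.volume_real_Ioc, sub_zero, max_eq_left hτ, smul_eq_mul]
    _ ≤ c * (τ * a + (t' - t)) := by
        gcongr
        rw [measureReal_restrict_apply measurableSet_Ioc]
        exact (measureReal_mono inter_subset_left measure_Ioc_lt_top.ne).trans
          (Real.volume_real_Ioc_of_le htt').le

lemma integrable_sq_sub_of_mem_unitInterval {X : Type*} [MeasurableSpace X] {μ : Measure X}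
    [IsFiniteMeasure μ] {u v : X → ℝ} (hu : Measurable u) (hv : Measurable v)
    (hu01 : ∀ x, 0 ≤ u x ∧ u x ≤ 1) (hv01 : ∀ x, 0 ≤ v x ∧ v x ≤ 1) :
    Integrable (fun x => (u x - v x) ^ 2) μ :=
  .of_bound ((hu.sub hv).pow_const 2).aestronglyMeasurable 1 <| .of_forall fun x => by
    rw [norm_pow, Real.norm_eq_abs]
    exact pow_le_one₀ (abs_nonneg _)
      (abs_sub_le_of_nonneg_of_le (hu01 x).1 (hu01 x).2 (hv01 x).1 (hv01 x).2)

lemma integral_le_mul_add_of_le {X : Type*} [MeasurableSpace X] {μ : Measure X}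
    [IsProbabilityMeasure μ] {f φ : X → ℝ} {c τ Δ : ℝ} (hf0 : 0 ≤ f) (hφ : Integrable φ μ)
    (hf : ∀ x, f x ≤ c * (τ * φ x + Δ)) :
    ∫ x, f x ∂μ ≤ c * (τ * ∫ x, φ x ∂μ + Δ) :=
  calc ∫ x, f x ∂μ ≤ ∫ x, c * (τ * φ x + Δ) ∂μ :=
        integral_mono_of_nonneg (.of_forall hf0)
          (((hφ.const_mul τ).add (integrable_const Δ)).const_mul c) (.of_forall hf)
    _ = c * (τ * ∫ x, φ x ∂μ + Δ) := by
        rw [integral_const_mul, integral_add (hφ.const_mul τ) (integrable_const Δ),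
          integral_const_mul, integral_const, probReal_univ, one_smul]

lemma sqrt_mul_add_le {τ A Δ K : ℝ} (hτ : 0 ≤ τ) (hA : 0 ≤ A) (hΔ : 0 ≤ Δ)
    (hAK : √A ≤ K * √Δ) : √(τ * A + Δ) ≤ (1 + K * √τ) * √Δ := by
  have hKΔ : 0 ≤ K * √Δ := (Real.sqrt_nonneg A).trans hAK
  have hτA : τ * A ≤ (√τ * (K * √Δ)) ^ 2 := by
    calc τ * A = (√τ * √A) ^ 2 := by rw [mul_pow, Real.sq_sqrt hτ, Real.sq_sqrt hA]
      _ ≤ (√τ * (K * √Δ)) ^ 2 := by gcongr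
  rw [Real.sqrt_le_iff]
  have hτKΔ : 0 ≤ √τ * (K * √Δ) := mul_nonneg (Real.sqrt_nonneg τ) hKΔ
  constructor
  · nlinarith [Real.sqrt_nonneg Δ]
  · nlinarith [Real.sq_sqrt hΔ, Real.sqrt_nonneg Δ]

theorem index_function_L2_bound_other_cause_general {X : Type*} [MeasurableSpace X]
    (μ : Measure X) [IsProbabilityMeasure μ]
    (τ : ℝ) (κ' : ℝ) (hκ : 0 < κ' ∧ κ' ≤ 1) (η : ℝ) (hη : 0 < η)
    (K' : ℝ)
    (F : ℝ → X → ℝ) (hFmeas : Measurable (Function.uncurry F))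
    (hF01 : ∀ t x, t ∈ Set.Icc 0 τ → 0 ≤ F t x ∧ F t x ≤ 1)
    (hFmono : ∀ x, MonotoneOn (fun t => F t x) (Set.Icc 0 τ))
    (S : ℝ → X → ℝ)
    (hSlb : ∀ s x, s ∈ Set.Icc 0 τ → κ' ≤ S s x)
    (g : ℝ → X → ℝ)
    (hg : ∀ s x, s ∈ Set.Icc 0 τ → 0 ≤ g s x ∧ g s x ≤ η)
    (ht' : ℝ → ℝ → X → ℝ)
    (hdef : ∀ t s x, ht' t s x =
      -(g s x * (if s ≤ t then (1:ℝ) else 0) * ((F t x - F s x) / S s x)))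
    (t t'' : ℝ) (htnn : 0 ≤ t) (htt : t ≤ t'') (htle : t'' ≤ τ)
    (hLip : Real.sqrt (∫ x, (F t'' x - F t x) ^ 2 ∂μ) ≤ K' * Real.sqrt (t'' - t)) :
    Real.sqrt (∫ x, (∫ s in Set.Ioc (0:ℝ) τ, (ht' t'' s x - ht' t s x) ^ 2) ∂μ) ≤
      (η / κ') * (1 + K' * Real.sqrt τ) * Real.sqrt (t'' - t) := by
  obtain rfl : ht' = indexFun g S F := by ext; exact hdef ..
  have hτ : 0 ≤ τ := htnn.trans (htt.trans htle)
  have hC : 0 ≤ η / κ' := div_nonneg hη.le hκ.1.le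
  have hΔF : Integrable (fun x => (F t'' x - F t x) ^ 2) μ :=
    integrable_sq_sub_of_mem_unitInterval (hFmeas.comp measurable_prodMk_left)
      (hFmeas.comp measurable_prodMk_left) (fun x => hF01 t'' x ⟨htnn.trans htt, htle⟩)
      (fun x => hF01 t x ⟨htnn, htt.trans htle⟩)
  have hinner : ∀ x, ∫ s in Ioc 0 τ, (indexFun g S F t'' s x - indexFun g S F t s x) ^ 2 ≤
      (η / κ') ^ 2 * (τ * (F t'' x - F t x) ^ 2 + (t'' - t)) := fun x =>
    setIntegral_Ioc_le_of_le_add_indicator (sq_nonneg _) hτ htt (fun _ => sq_nonneg _)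
      fun s hs => indexFun_sub_sq_le (fun u hu => hF01 u x hu) (hFmono x) hκ.1
        (hSlb s x (Ioc_subset_Icc_self hs)) (hg s x (Ioc_subset_Icc_self hs))
        (Ioc_subset_Icc_self hs) ⟨htnn.trans htt, htle⟩ htt
  have houter := integral_le_mul_add_of_le (μ := μ)
    (fun x => integral_nonneg fun s => sq_nonneg _) hΔF hinner
  calc _ ≤ √((η / κ') ^ 2 * (τ * ∫ x, (F t'' x - F t x) ^ 2 ∂μ + (t'' - t))) :=
        Real.sqrt_le_sqrt houter
    _ = η / κ' * √(τ * ∫ x, (F t'' x - F t x) ^ 2 ∂μ + (t'' - t)) := by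
        rw [Real.sqrt_mul (sq_nonneg _), Real.sqrt_sq hC]
    _ ≤ η / κ' * ((1 + K' * √τ) * √(t'' - t)) :=
        mul_le_mul_of_nonneg_left (sqrt_mul_add_le hτ (integral_nonneg fun x => sq_nonneg _)
          (sub_nonneg.2 htt) hLip) hC
    _ = _ := (mul_assoc _ _ _).symm

/-- Verification of Assumption A2 (case l ≠ 1): under the Lipschitz-type
condition on the absolute risk `F`, the `L²(μ ⊗ Lebesgue)` distance between the index
functions `h̃_{t'}` and `h̃_t`, where
`h̃_t(s,x) = −g(s,x)·𝟙{s ≤ t}·(F(t,x) − F(s,x))/S(s,x)`, is of order `(t' − t)^{1/2}`. -/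
theorem index_function_L2_bound_other_cause {X : Type*} [MeasurableSpace X]
    (μ : Measure X) [IsProbabilityMeasure μ]
    (τ : ℝ) (hτ : 0 < τ) (κ' : ℝ) (hκ : 0 < κ' ∧ κ' ≤ 1) (η : ℝ) (hη : 0 < η)
    (K' : ℝ) (hK' : 0 < K')
    (F : ℝ → X → ℝ) (hFmeas : Measurable (Function.uncurry F))
    (hF01 : ∀ t x, t ∈ Set.Icc 0 τ → 0 ≤ F t x ∧ F t x ≤ 1)
    (hFmono : ∀ x, MonotoneOn (fun t => F t x) (Set.Icc 0 τ))
    (S : ℝ → X → ℝ) (hSmeas : Measurable (Function.uncurry S))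
    (hSlb : ∀ s x, s ∈ Set.Icc 0 τ → κ' ≤ S s x)
    (g : ℝ → X → ℝ) (hgmeas : Measurable (Function.uncurry g))
    (hg : ∀ s x, s ∈ Set.Icc 0 τ → 0 ≤ g s x ∧ g s x ≤ η)
    (ht' : ℝ → ℝ → X → ℝ)
    (hdef : ∀ t s x, ht' t s x =
      -(g s x * (if s ≤ t then (1:ℝ) else 0) * ((F t x - F s x) / S s x)))
    (t t'' : ℝ) (htnn : 0 ≤ t) (htt : t ≤ t'') (htle : t'' ≤ τ)
    (hLip : Real.sqrt (∫ x, (F t'' x - F t x) ^ 2 ∂μ) ≤ K' * Real.sqrt (t'' - t)) :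
    Real.sqrt (∫ x, (∫ s in Set.Ioc (0:ℝ) τ, (ht' t'' s x - ht' t s x) ^ 2) ∂μ) ≤
      (η / κ') * (1 + K' * Real.sqrt τ) * Real.sqrt (t'' - t) :=
  index_function_L2_bound_other_cause_general μ τ κ' hκ η hη K' F hFmeas hF01 hFmono S hSlb g hg ht'
    hdef t t'' htnn htt htle hLip
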